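/- arXiv:2201.09698 — 2 statements merged into one kernel-verified Lean document; each statement's English description precedes it below -/
import Mathlib

section
/- Let W be an n×n real matrix, let u₁,…,uₙ ∈ ℝⁿ be vectors with W ⬝ uᵢ = λᵢ • uᵢ for real numbers λ₁,…,λₙ, and suppose λ₁ > 0 and λ₁ > |λᵢ| for every i ≥ 2. If v⁰ = Σᵢ cᵢ • uᵢ for real coefficients c₁,…,cₙ with c₁ ≠ 0, then the normalized power-iteration sequence (c₁ · λ₁ᵏ)⁻¹ • (Wᵏ ⬝ v⁰) converges to the dominant eigenvector u₁ as k → ∞. -/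
open Matrix Filter

/-- Power iteration converges to the dominant eigenvector (paper's Theorem 1,
spectral-gap form). -/
theorem power_iteration_tendsto_dominant_eigenvector
    {n : ℕ} [NeZero n] (W : Matrix (Fin n) (Fin n) ℝ)
    (u : Fin n → (Fin n → ℝ)) (lam : Fin n → ℝ) (c : Fin n → ℝ)
    (heig : ∀ i, W.mulVec (u i) = lam i • u i)
    (hpos : 0 < lam 0)
    (hgap : ∀ i : Fin n, i ≠ 0 → |lam i| < lam 0)
    (hc : c 0 ≠ 0)
    (v0 : Fin n → ℝ) (hv0 : v0 = ∑ i, c i • u i) :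
    Tendsto (fun k : ℕ => (c 0 * lam 0 ^ k)⁻¹ • ((W ^ k).mulVec v0))
      atTop (nhds (u 0)) := by
  have hpow : ∀ (k : ℕ) (i : Fin n), (W ^ k).mulVec (u i) = (lam i ^ k) • u i := by
    intro k i
    induction k with
    | zero => simp
    | succ k ih =>
      rw [pow_succ', ← mulVec_mulVec, ih, mulVec_smul, heig, smul_smul, pow_succ', mul_comm]
  have key : ∀ k : ℕ, (c 0 * lam 0 ^ k)⁻¹ • ((W ^ k).mulVec v0)
      = ∑ i, ((c 0 * lam 0 ^ k)⁻¹ * (c i * lam i ^ k)) • u i := by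
    intro k
    rw [hv0]
    have : (W ^ k).mulVec (∑ i, c i • u i) = ∑ i, (c i * lam i ^ k) • u i := by
      have := map_sum ((W ^ k).mulVecLin) (fun i => c i • u i) Finset.univ
      simp only [mulVecLin_apply] at this
      rw [this]
      refine Finset.sum_congr rfl fun i _ => ?_
      rw [mulVec_smul, hpow, smul_smul]
    rw [this, Finset.smul_sum]
    refine Finset.sum_congr rfl fun i _ => ?_
    rw [smul_smul]
  simp only [key]
  have limit : ∀ i : Fin n,
      Tendsto (fun k : ℕ => (c 0 * lam 0 ^ k)⁻¹ * (c i * lam i ^ k)) atTop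
        (nhds (if i = 0 then (1 : ℝ) else 0)) := by
    intro i
    by_cases hi : i = 0
    · subst hi
      simp only [if_pos rfl]
      have : ∀ k : ℕ, (c 0 * lam 0 ^ k)⁻¹ * (c 0 * lam 0 ^ k) = 1 := by
        intro k
        exact inv_mul_cancel₀ (mul_ne_zero hc (pow_ne_zero k hpos.ne'))
      simp only [this]
      exact tendsto_const_nhds
    · simp only [if_neg hi]
      have habs : |lam i / lam 0| < 1 := by
        rw [abs_div, abs_of_pos hpos, div_lt_one hpos]
        exact hgap i hi
      have h1 : Tendsto (fun k : ℕ => (c i / c 0) * (lam i / lam 0) ^ k) atTop (nhds 0) := by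
        have := (tendsto_pow_atTop_nhds_zero_of_abs_lt_one habs).const_mul (c i / c 0)
        simpa using this
      refine h1.congr fun k => ?_
      field_simp
      rw [div_pow, mul_assoc, div_mul_cancel₀]
      exact pow_ne_zero k hpos.ne'
  have hsum := tendsto_finset_sum Finset.univ
    (fun i _ => (limit i).smul_const (u i))
  have : (∑ i : Fin n, (if i = 0 then (1 : ℝ) else 0) • u i) = u 0 := by
    rw [Finset.sum_eq_single 0]
    · simp
    · intro b _ hb; simp [hb]
    · simp
  rw [this] at hsum
  exact hsum
end

section
/- Let G be a simple graph on the finite vertex set Fin n with adjacency matrix A (over ℝ), let à = A + I be the adjacency matrix of the graph with self-loops added at every vertex, let D̃ be the diagonal matrix with D̃ᵢᵢ = 1 + deg(i), and D̃^{-1/2} the diagonal matrix with entries (1 + deg(i))^{-1/2}. Then every real eigenvalue λ of the renormalized matrix D̃^{-1/2} à D̃^{-1/2} satisfies -1 ≤ λ ≤ 1. -/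
open Matrix

/-- After GCN's renormalization trick, every real eigenvalue of
`D̃^{-1/2} Ã D̃^{-1/2}` (with `Ã = A + I` and `D̃ᵢᵢ = 1 + deg(i)`) lies in `[-1, 1]`. -/
theorem renormalized_adjacency_eigenvalues_mem_Icc
    {n : ℕ} (G : SimpleGraph (Fin n)) [DecidableRel G.Adj]
    (S : Matrix (Fin n) (Fin n) ℝ)
    (hS : S = (Matrix.diagonal fun i => ((1 + G.degree i : ℝ)) ^ (-(1 / 2 : ℝ))) *
        (G.adjMatrix ℝ + 1) *
        (Matrix.diagonal fun i => ((1 + G.degree i : ℝ)) ^ (-(1 / 2 : ℝ)))) :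
    ∀ lam : ℝ, (∃ v : Fin n → ℝ, v ≠ 0 ∧ S.mulVec v = lam • v) →
      -1 ≤ lam ∧ lam ≤ 1 := by
  intro lam ⟨v, hv, hSv⟩
  set d : Fin n → ℝ := fun i => (1 + G.degree i : ℝ) with hd_def
  have hd : ∀ i, 0 < d i := fun i => by positivity
  set f : Fin n → ℝ := fun i => (d i) ^ (-(1 / 2 : ℝ)) with hf_def
  have hf : ∀ i, 0 < f i := fun i => Real.rpow_pos_of_pos (hd i) _
  set w : Fin n → ℝ := fun j => f j * v j with hw_def
  have hff : ∀ i, f i * f i * d i = 1 := by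
    intro i
    have : f i * f i = d i ^ (-(1 / 2 : ℝ) + -(1 / 2 : ℝ)) :=
      (Real.rpow_add (hd i) _ _).symm
    rw [this]
    norm_num
    rw [Real.rpow_neg_one]
    exact inv_mul_cancel₀ (hd i).ne'
  -- key eigen equation in terms of w
  have key : ∀ i, (∑ u ∈ G.neighborFinset i, w u) + w i = lam * (d i * w i) := by
    intro i
    have h1 := congrFun hSv i
    rw [hS] at h1
    rw [← Matrix.mulVec_mulVec, ← Matrix.mulVec_mulVec] at h1
    have h2 : (Matrix.diagonal f).mulVec v = w := by
      funext j; rw [Matrix.mulVec_diagonal]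
    rw [h2] at h1
    rw [Matrix.mulVec_diagonal] at h1
    have h3 : ((G.adjMatrix ℝ + 1).mulVec w) i
        = (∑ u ∈ G.neighborFinset i, w u) + w i := by
      rw [Matrix.add_mulVec, Matrix.one_mulVec]
      simp
    have h4 : f i * ((G.adjMatrix ℝ + 1).mulVec w) i = lam * v i := h1
    have h5 : f i * (f i * ((G.adjMatrix ℝ + 1).mulVec w) i) = f i * (lam * v i) := by
      rw [h4]
    have h6 : f i * f i * ((G.adjMatrix ℝ + 1).mulVec w) i = lam * w i := by
      ring_nf at h5 ⊢
      linarith [h5]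
    have h7 : d i * (f i * f i * ((G.adjMatrix ℝ + 1).mulVec w) i) = d i * (lam * w i) := by
      rw [h6]
    rw [h3] at h7
    have h8 := hff i
    linear_combination h7 - (∑ u ∈ G.neighborFinset i, w u + w i) * h8
  -- pick index maximizing |w|
  have hwne : ∃ j, w j ≠ 0 := by
    by_contra h
    push_neg at h
    apply hv
    funext j
    have := h j
    have : v j = 0 := by
      rcases mul_eq_zero.mp this with h' | h'
      · exact absurd h' (hf j).ne'
      · exact h'
    simpa using this
  obtain ⟨j0, hj0⟩ := hwne
  obtain ⟨i0, -, hi0⟩ := Finset.exists_max_image Finset.univ (fun i => |w i|)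
    ⟨j0, Finset.mem_univ j0⟩
  have hwi0 : 0 < |w i0| := lt_of_lt_of_le (abs_pos.mpr hj0) (hi0 j0 (Finset.mem_univ j0))
  have hbound : |lam| * (d i0 * |w i0|) ≤ d i0 * |w i0| := by
    have hk := key i0
    have h1 : |lam * (d i0 * w i0)| = |lam| * (d i0 * |w i0|) := by
      rw [abs_mul, abs_mul, abs_of_pos (hd i0)]
    have h2 : |(∑ u ∈ G.neighborFinset i0, w u) + w i0| ≤ d i0 * |w i0| := by
      calc |(∑ u ∈ G.neighborFinset i0, w u) + w i0|
          ≤ |∑ u ∈ G.neighborFinset i0, w u| + |w i0| := abs_add_le _ _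
        _ ≤ (∑ u ∈ G.neighborFinset i0, |w u|) + |w i0| := by
            gcongr; exact Finset.abs_sum_le_sum_abs _ _
        _ ≤ (∑ _u ∈ G.neighborFinset i0, |w i0|) + |w i0| :=
            add_le_add_left
              (Finset.sum_le_sum fun u _ => hi0 u (Finset.mem_univ u)) _
        _ = (G.degree i0 : ℝ) * |w i0| + |w i0| := by
            rw [Finset.sum_const, nsmul_eq_mul, SimpleGraph.card_neighborFinset_eq_degree]
        _ = d i0 * |w i0| := by rw [hd_def]; ring
    calc |lam| * (d i0 * |w i0|) = |lam * (d i0 * w i0)| := h1.symm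
      _ = |(∑ u ∈ G.neighborFinset i0, w u) + w i0| := by rw [hk]
      _ ≤ d i0 * |w i0| := h2
  have hlam : |lam| ≤ 1 := by
    have hpos : 0 < d i0 * |w i0| := mul_pos (hd i0) hwi0
    nlinarith [hbound]
  exact abs_le.mp hlam
end
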